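/- arXiv:0709.0048 — 2 statements merged into one kernel-verified Lean document; each statement's English description precedes it below -/
import Mathlib

section
/- Let m1, m2 ≥ 4 be even integers and let m3 ≥ 3 be an odd integer. Then there exists a coloring of the edges of the complete graph on m1/2 + m2/2 + m3 − 3 vertices with three colors such that color 1 contains no cycle of length m1, color 2 contains no cycle of length m2, and color 3 contains no cycle of length m3. (Construction: partition the vertex set into V1, V2, V3 with |V1| = m1/2 − 1, |V2| = m2/2 − 1, |V3| = m3 − 1; color all edges inside V3 with color 3, all edges with at least one endpoint in V2 with color 2, and all remaining edges with color 1; then color 1 has no cycle longer than m1 − 2, color 2 no cycle longer than m2 − 2, and color 3 no cycle longer than m3 − 1.) -/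
/-! Every colour-`0` edge meets `V₁` and every colour-`1` edge meets `V₂`. Along a cycle in a graph
all of whose edges meet a set `S`, no two consecutive vertices lie outside `S`, so at most half of
the vertices of the cycle do, and the cycle has length at most `2 |S|`: this is `m₁ - 2`, resp.
`m₂ - 2`. Colour-`2` edges lie inside `V₃`, so colour-`2` cycles have length at most
`|V₃| = m₃ - 1`. -/

open SimpleGraph

/-- The graph spanned by color `i` of a coloring `C` of the edges of the complete graph. -/
def colorGraph {V : Type*} {k : ℕ} (C : Sym2 V → Fin k) (i : Fin k) : SimpleGraph V where
  Adj u v := u ≠ v ∧ C s(u, v) = i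
  symm := by
    constructor
    intro u v h
    refine ⟨h.1.symm, ?_⟩
    rw [Sym2.eq_swap]
    exact h.2
  loopless := by
    constructor
    intro v h
    exact h.1 rfl

/-- `G` contains a cycle of length exactly `L`. -/
def hasCycleLength {V : Type*} (G : SimpleGraph V) (L : ℕ) : Prop :=
  ∃ (v : V) (w : G.Walk v v), w.IsCycle ∧ w.length = L

open Finset

namespace List

variable {α : Type*} (p : α → Prop) [DecidablePred p]

theorem countP_not_le_countP_of_isChain_cons {a : α} {l : List α} (ha : p a)
    (h : (a :: l).IsChain (fun x y => p x ∨ p y)) :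
    (a :: l).countP (fun x => ¬ p x) ≤ (a :: l).countP (fun x => p x) := by
  match l, h with
  | [], _ => simp [ha]
  | b :: l, h =>
    rw [isChain_cons_cons] at h
    by_cases hb : p b
    · have := countP_not_le_countP_of_isChain_cons hb h.2
      grind
    · match l, h with
      | [], _ => simp [ha, hb]
      | c :: l, h =>
        rw [isChain_cons_cons] at h
        have hc : p c := h.2.1.resolve_left hb
        have := countP_not_le_countP_of_isChain_cons hc h.2.2
        grind

/-- If `p v`, read the cyclic list backwards from `v`; otherwise the successor of `v`
satisfies `p`. -/
theorem countP_not_le_countP_of_isChain_cons_of_getLast {v : α} {l : List α}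
    (h : (v :: l).IsChain (fun x y => p x ∨ p y)) (hl : l.getLast? = some v) :
    l.countP (fun x => ¬ p x) ≤ l.countP (fun x => p x) := by
  by_cases hv : p v
  · obtain ⟨t, ht⟩ : ∃ t, l.reverse = v :: t := head?_eq_some_iff.mp (by rwa [head?_reverse])
    have hrev : l.reverse.IsChain (fun x y => p x ∨ p y) :=
      isChain_reverse.mpr (h.tail.imp fun _ _ => Or.symm)
    rw [← countP_reverse, ← countP_reverse (l := l), ht]
    exact countP_not_le_countP_of_isChain_cons p hv (ht ▸ hrev)
  · obtain _ | ⟨b, l⟩ := l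
    · simp
    rw [isChain_cons_cons] at h
    exact countP_not_le_countP_of_isChain_cons p (h.1.resolve_left hv) h.2

theorem Nodup.length_le_card_of_forall_mem [DecidableEq α] {l : List α} {s : Finset α}
    (hl : l.Nodup) (hs : ∀ x ∈ l, x ∈ s) : l.length ≤ #s := by
  rw [← toFinset_card_of_nodup hl]
  exact card_le_card fun x hx => hs x (mem_toFinset.mp hx)

end List

namespace SimpleGraph.Walk.IsCycle

variable {V : Type*} {G : SimpleGraph V} {v : V} {w : G.Walk v v}

theorem getLast?_support_tail (hw : w.IsCycle) : w.support.tail.getLast? = some v := by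
  cases w with
  | nil => exact absurd hw not_isCycle_nil
  | cons _ q => simp [List.getLast?_eq_some_getLast, q.getLast_support]

theorem length_le_two_mul_card [DecidableEq V] (hw : w.IsCycle) {s : Finset V}
    (hs : ∀ x y, G.Adj x y → x ∈ s ∨ y ∈ s) : w.length ≤ 2 * #s := by
  have hchain : (v :: w.support.tail).IsChain (fun x y => x ∈ s ∨ y ∈ s) := by
    rw [w.cons_tail_support]
    exact w.isChain_adj_support.imp hs
  have hout := List.countP_not_le_countP_of_isChain_cons_of_getLast (· ∈ s) hchain
    hw.getLast?_support_tail
  have hin : w.support.tail.countP (· ∈ s) ≤ #s := by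
    rw [List.countP_eq_length_filter]
    exact (hw.support_nodup.filter _).length_le_card_of_forall_mem fun x hx => by
      simpa using (List.mem_filter.mp hx).2
  have hlen := List.length_eq_countP_add_countP (· ∈ s) (l := w.support.tail)
  simp only [List.length_tail, length_support, add_tsub_cancel_right, Bool.decide_eq_true,
    decide_not] at hlen hout
  omega

theorem length_le_card [DecidableEq V] (hw : w.IsCycle) {s : Finset V}
    (hs : ∀ x y, G.Adj x y → y ∈ s) : w.length ≤ #s := by
  rw [← w.length_darts, ← List.length_map (f := (·.snd)), w.map_snd_darts]
  refine hw.support_nodup.length_le_card_of_forall_mem fun x hx => ?_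
  rw [← w.map_snd_darts, List.mem_map] at hx
  obtain ⟨d, -, rfl⟩ := hx
  exact hs _ _ d.adj

end SimpleGraph.Walk.IsCycle

section PartColoring

variable {V : Type*}

/-- `part x = i` puts `x` into the class `V_{i+1}` of the construction. -/
def partColoring (part : V → Fin 3) : Sym2 V → Fin 3 :=
  Sym2.lift ⟨fun u v => if part u = 1 ∨ part v = 1 then 1
    else if part u = 2 ∧ part v = 2 then 2 else 0, fun u v => by simp only [or_comm, and_comm]⟩

variable {part : V → Fin 3} {u v : V}

theorem colorGraph_partColoring_zero_adj (h : (colorGraph (partColoring part) 0).Adj u v) :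
    part u = 0 ∨ part v = 0 := by
  obtain ⟨-, h⟩ := h
  simp only [partColoring, Sym2.lift_mk] at h
  split_ifs at h <;> omega

theorem colorGraph_partColoring_one_adj (h : (colorGraph (partColoring part) 1).Adj u v) :
    part u = 1 ∨ part v = 1 := by
  obtain ⟨-, h⟩ := h
  simp only [partColoring, Sym2.lift_mk] at h
  split_ifs at h <;> omega

theorem colorGraph_partColoring_two_adj (h : (colorGraph (partColoring part) 2).Adj u v) :
    part u = 2 ∧ part v = 2 := by
  obtain ⟨-, h⟩ := h
  simp only [partColoring, Sym2.lift_mk] at h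
  split_ifs at h <;> omega

end PartColoring

theorem Fin.card_le_of_forall_val_mem_Ico {n lo hi : ℕ} {s : Finset (Fin n)}
    (hs : ∀ x ∈ s, x.val ∈ Ico lo hi) : #s ≤ hi - lo := by
  simpa using card_le_card_of_injOn Fin.val hs Fin.val_injective.injOn

theorem ramsey_two_even_one_odd_cycles_lower_two_general
    (m1 m2 m3 : ℕ) (h1' : 4 ≤ m1) (h2' : 4 ≤ m2) (h3' : 3 ≤ m3) :
    ∃ C : Sym2 (Fin (m1 / 2 + m2 / 2 + m3 - 3)) → Fin 3,
      ¬ hasCycleLength (colorGraph C 0) m1 ∧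
      ¬ hasCycleLength (colorGraph C 1) m2 ∧
      ¬ hasCycleLength (colorGraph C 2) m3 := by
  set n := m1 / 2 + m2 / 2 + m3 - 3
  set a := m1 / 2 - 1
  set b := m2 / 2 - 1
  let part : Fin n → Fin 3 := fun x => if x.val < a then 0 else if x.val < a + b then 1 else 2
  have hcard : #{x | part x = 0} ≤ a - 0 ∧ #{x | part x = 1} ≤ a + b - a ∧
      #{x | part x = 2} ≤ n - (a + b) := by
    refine ⟨?_, ?_, ?_⟩ <;> refine Fin.card_le_of_forall_val_mem_Ico fun x hx => ?_ <;>
      simp only [mem_filter, mem_univ, true_and, part, mem_Ico] at hx ⊢ <;>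
      split_ifs at hx <;> omega
  refine ⟨partColoring part, ?_, ?_, ?_⟩ <;> rintro ⟨v, w, hw, hlen⟩
  · have := hw.length_le_two_mul_card (s := {x | part x = 0}) fun x y h => by
      simpa using colorGraph_partColoring_zero_adj h
    omega
  · have := hw.length_le_two_mul_card (s := {x | part x = 1}) fun x y h => by
      simpa using colorGraph_partColoring_one_adj h
    omega
  · have := hw.length_le_card (s := {x | part x = 2}) fun x y h => by
      simpa using (colorGraph_partColoring_two_adj h).2
    omega

theorem ramsey_two_even_one_odd_cycles_lower_two
    (m1 m2 m3 : ℕ) (h1 : Even m1) (h2 : Even m2) (h3 : Odd m3)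
    (h1' : 4 ≤ m1) (h2' : 4 ≤ m2) (h3' : 3 ≤ m3) :
    ∃ C : Sym2 (Fin (m1 / 2 + m2 / 2 + m3 - 3)) → Fin 3,
      ¬ hasCycleLength (colorGraph C 0) m1 ∧
      ¬ hasCycleLength (colorGraph C 1) m2 ∧
      ¬ hasCycleLength (colorGraph C 2) m3 :=
  ramsey_two_even_one_odd_cycles_lower_two_general m1 m2 m3 h1' h2' h3'
end

section
/- Let m1 ≥ 4 be an even integer and let m2, m3 ≥ 3 be odd integers. Then there exists a coloring of the edges of the complete graph on 4·m1 − 4 vertices with three colors such that color 1 contains no cycle of length m1, color 2 contains no cycle of length m2, and color 3 contains no cycle of length m3. (Construction: split the vertex set into four parts of size m1 − 1 each; color all edges inside the parts with color 1 and the remaining edges with colors 2 and 3 so that both color 2 and color 3 are bipartite; then color 1 has no cycle longer than m1 − 1 and colors 2 and 3 contain no odd cycle.) -/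
/-!
Split the vertices into four parts of size `m1 - 1`, indexed by `Bool × Bool`. Edges inside a part
get colour 0, edges between parts whose first coordinates differ get colour 1, and the remaining
edges colour 2. A colour-0 cycle stays inside one part, so it has length at most `m1 - 1`; colours 1
and 2 are properly 2-coloured by the first, resp. second, coordinate of the part, so they have no
odd cycles.
-/

open SimpleGraph

namespace SimpleGraph

variable {V β : Type*} {G : SimpleGraph V}

theorem Walk.apply_eq_of_mem_support (f : V → β) (hf : ∀ ⦃a b⦄, G.Adj a b → f a = f b)
    {u v x : V} (w : G.Walk u v) (hx : x ∈ w.support) : f x = f u := by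
  induction w with
  | nil => rw [Walk.mem_support_nil_iff.mp hx]
  | cons h p ih =>
    rcases List.mem_cons.mp (Walk.support_cons h p ▸ hx) with rfl | hx
    · rfl
    · exact (ih hx).trans (hf h).symm

open Finset in
theorem Walk.IsCycle.length_le_card_fiber [Fintype V] [DecidableEq β] (f : V → β)
    (hf : ∀ ⦃a b⦄, G.Adj a b → f a = f b) {v : V} {w : G.Walk v v} (hc : w.IsCycle) :
    w.length ≤ #{x | f x = f v} := by
  classical
  have hsub : w.support.tail.toFinset ⊆ ({x | f x = f v} : Finset V) := fun x hx => by
    rw [List.mem_toFinset] at hx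
    simpa using w.apply_eq_of_mem_support f hf (List.mem_of_mem_tail hx)
  calc w.length = w.support.tail.toFinset.card := by
        rw [List.toFinset_card_of_nodup hc.support_nodup, List.length_tail, Walk.length_support]
        rfl
    _ ≤ _ := card_le_card hsub

theorem Coloring.not_hasCycleLength_of_odd (c : G.Coloring Bool) {L : ℕ} (hL : Odd L) :
    ¬ hasCycleLength G L := by
  rintro ⟨v, w, -, rfl⟩
  exact Nat.not_even_iff_odd.mpr hL ((c.even_length_iff_congr w).mpr Iff.rfl)

end SimpleGraph

def blockColor {V : Type*} (part : V → Bool × Bool) (u v : V) : Fin 3 :=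
  if part u = part v then 0 else if (part u).1 ≠ (part v).1 then 1 else 2

theorem blockColor_comm {V : Type*} (part : V → Bool × Bool) (u v : V) :
    blockColor part u v = blockColor part v u := by
  simp only [blockColor, eq_comm, ne_comm]

def blockColoring {V : Type*} (part : V → Bool × Bool) : Sym2 V → Fin 3 :=
  Sym2.lift ⟨blockColor part, blockColor_comm part⟩

section blockColoring

variable {V : Type*} {part : V → Bool × Bool} {u v : V}

theorem part_eq_of_colorGraph_blockColoring_zero
    (h : (colorGraph (blockColoring part) 0).Adj u v) : part u = part v := by
  have := h.2
  simp only [blockColoring, Sym2.lift_mk, blockColor] at this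
  split_ifs at this with h0 <;> first | exact h0 | exact absurd this (by decide)

theorem part_fst_ne_of_colorGraph_blockColoring_one
    (h : (colorGraph (blockColoring part) 1).Adj u v) : (part u).1 ≠ (part v).1 := by
  have := h.2
  simp only [blockColoring, Sym2.lift_mk, blockColor] at this
  split_ifs at this with h0 h1 <;> first | exact h1 | exact absurd this (by decide)

theorem part_snd_ne_of_colorGraph_blockColoring_two
    (h : (colorGraph (blockColoring part) 2).Adj u v) : (part u).2 ≠ (part v).2 := by
  have := h.2
  simp only [blockColoring, Sym2.lift_mk, blockColor] at this
  split_ifs at this with h0 h1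
  · exact absurd this (by decide)
  · exact absurd this (by decide)
  · exact fun h2 => h0 (Prod.ext (not_not.mp h1) h2)

end blockColoring

open Finset in
theorem card_fiber_fst_le {V α W : Type*} [Fintype V] [Fintype W] [DecidableEq α]
    (e : V ≃ α × W) (a : α) : #{x | (e x).1 = a} ≤ Fintype.card W :=
  card_le_card_of_injOn (fun x => (e x).2) (fun _ _ => mem_coe.mpr (mem_univ _))
    fun _ hx _ hy hxy =>
      e.injective (Prod.ext ((mem_filter.mp hx).2.trans (mem_filter.mp hy).2.symm) hxy)

theorem ramsey_one_even_two_odd_cycles_lower_one_general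
    (m1 m2 m3 : ℕ) (h2 : Odd m2) (h3 : Odd m3) :
    ∃ C : Sym2 (Fin (4 * m1 - 4)) → Fin 3,
      ¬ hasCycleLength (colorGraph C 0) m1 ∧
      ¬ hasCycleLength (colorGraph C 1) m2 ∧
      ¬ hasCycleLength (colorGraph C 2) m3 := by
  let e : Fin (4 * m1 - 4) ≃ (Bool × Bool) × Fin (m1 - 1) :=
    Fintype.equivOfCardEq <| by
      simp only [Fintype.card_fin, Fintype.card_prod, Fintype.card_bool]; omega
  let part x := (e x).1
  refine ⟨blockColoring part, ?_, ?_, ?_⟩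
  · rintro ⟨v, w, hc, hm1⟩
    have hlen : w.length ≤ m1 - 1 :=
      (hc.length_le_card_fiber part fun _ _ => part_eq_of_colorGraph_blockColoring_zero).trans
        ((card_fiber_fst_le e _).trans_eq (Fintype.card_fin _))
    have hthree := hc.three_le_length
    omega
  · exact (Coloring.mk (fun x => (part x).1)
      part_fst_ne_of_colorGraph_blockColoring_one).not_hasCycleLength_of_odd h2
  · exact (Coloring.mk (fun x => (part x).2)
      part_snd_ne_of_colorGraph_blockColoring_two).not_hasCycleLength_of_odd h3

theorem ramsey_one_even_two_odd_cycles_lower_one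
    (m1 m2 m3 : ℕ) (h1 : Even m1) (h2 : Odd m2) (h3 : Odd m3)
    (h1' : 4 ≤ m1) (h2' : 3 ≤ m2) (h3' : 3 ≤ m3) :
    ∃ C : Sym2 (Fin (4 * m1 - 4)) → Fin 3,
      ¬ hasCycleLength (colorGraph C 0) m1 ∧
      ¬ hasCycleLength (colorGraph C 1) m2 ∧
      ¬ hasCycleLength (colorGraph C 2) m3 :=
  ramsey_one_even_two_odd_cycles_lower_one_general m1 m2 m3 h2 h3
end
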